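/- Let x0 be a Pareto critical point of f: R^n -> R^k. Then there exists I subset {1,...,k} with |I| = rank(Df(x0)) + 1 such that rank(Df^I(x0)) = rank(Df(x0)) and x0 is Pareto critical for the subproblem with objectives indexed by I. -/

import Mathlib

noncomputable def Jac (n k : ℕ) (f : Fin k → (Fin n → ℝ) → ℝ) (x : Fin n → ℝ) :
    Matrix (Fin k) (Fin n) ℝ :=
  Matrix.of fun i j => fderiv ℝ (f i) x (Pi.single j 1)

/-- The Jacobian of the subvector `f^I` at `x` (rows indexed by `I`). -/
noncomputable def JacSub (n k : ℕ) (f : Fin k → (Fin n → ℝ) → ℝ) (x : Fin n → ℝ)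
    (I : Finset (Fin k)) : Matrix I (Fin n) ℝ :=
  Matrix.of fun i j => fderiv ℝ (f (i : Fin k)) x (Pi.single j 1)

def ParetoCriticalSub (n k : ℕ) (f : Fin k → (Fin n → ℝ) → ℝ) (I : Finset (Fin k)) :
    Set (Fin n → ℝ) :=
  {x | ∃ α : Fin k → ℝ, (∀ i, 0 ≤ α i) ∧ (∀ i ∉ I, α i = 0) ∧ ∑ i, α i = 1 ∧
    (∑ i, α i • fderiv ℝ (f i) x) = 0}

/-! The rows `g i` of `Df(x₀)` represent the gradients, and Pareto criticality says that `0` lies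
in their convex hull. By Carathéodory, `0` is a convex combination of affinely independent rows
`g i, i ∈ J`; as `0` lies in their affine span, their vector span is their linear span, so
`#J = dim span (g '' J) + 1`. Adding rows outside the current span one at a time raises the
cardinality and the dimension together until the span is the whole row space. The resulting
`I ⊇ J` has `#I = rank Df(x₀) + 1` and `rank Df^I(x₀) = rank Df(x₀)`, and the weights on `J`
witness criticality for `I`. -/

open Module Submodule Finset

section ConvexCombination

theorem vectorSpan_eq_span_of_zero_mem_affineSpan {k V : Type*} [Ring k] [AddCommGroup V]
    [Module k V] {s : Set V} (h : (0 : V) ∈ affineSpan k s) :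
    vectorSpan k s = span k s := by
  refine le_antisymm ?_ (span_le.2 fun x hx => ?_)
  · rw [vectorSpan_def, span_le]
    rintro _ ⟨x, hx, y, hy, rfl⟩
    exact sub_mem (subset_span hx) (subset_span hy)
  · rw [← direction_affineSpan]
    simpa using AffineSubspace.vsub_mem_direction (mem_affineSpan k hx) h

theorem AffineIndependent.card_eq_finrank_span_add_one {𝕜 E : Type*} [DivisionRing 𝕜]
    [PartialOrder 𝕜] [AddCommGroup E] [Module 𝕜 E] {t : Finset E}
    (ht : AffineIndependent 𝕜 ((↑) : t → E)) (h0 : (0 : E) ∈ convexHull 𝕜 (t : Set E)) :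
    #t = finrank 𝕜 (span 𝕜 (t : Set E)) + 1 := by
  have : Nonempty t := (convexHull_nonempty_iff.1 ⟨0, h0⟩).to_subtype
  have hcard := ht.finrank_vectorSpan_add_one
  rw [Subtype.range_coe_subtype, Fintype.card_coe] at hcard
  rw [← hcard, ← vectorSpan_eq_span_of_zero_mem_affineSpan (convexHull_subset_affineSpan _ h0)]
  rfl

variable {𝕜 E ι : Type*} [Field 𝕜] [LinearOrder 𝕜] [IsStrictOrderedRing 𝕜]
  [AddCommGroup E] [Module 𝕜 E]

theorem exists_finset_injOn_zero_mem_convexHull_card_eq (g : ι → E) (s : Set ι)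
    (h0 : (0 : E) ∈ convexHull 𝕜 (g '' s)) :
    ∃ J : Finset ι, ↑J ⊆ s ∧ Set.InjOn g J ∧ (0 : E) ∈ convexHull 𝕜 (g '' J) ∧
      #J = finrank 𝕜 (span 𝕜 (g '' J)) + 1 := by
  classical
  rw [convexHull_eq_union] at h0
  simp only [Set.mem_iUnion] at h0
  obtain ⟨t, hts, ht, h0t⟩ := h0
  obtain ⟨J, hJs, hinj, rfl⟩ := Finset.exists_subset_injOn_image_eq_of_surjOn s t hts
  have hcard := ht.card_eq_finrank_span_add_one h0t
  rw [coe_image] at h0t hcard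
  exact ⟨J, hJs, hinj, h0t, (card_image_of_injOn hinj).symm.trans hcard⟩

theorem exists_weights_of_mem_convexHull_image [Fintype ι] {g : ι → E} {J : Finset ι}
    (hinj : Set.InjOn g J) {x : E} (hx : x ∈ convexHull 𝕜 (g '' J)) :
    ∃ w : ι → 𝕜, (∀ i, 0 ≤ w i) ∧ (∀ i ∉ J, w i = 0) ∧ ∑ i, w i = 1 ∧ ∑ i, w i • g i = x := by
  classical
  rw [← coe_image, Finset.mem_convexHull'] at hx
  obtain ⟨v, hv0, hv1, hvx⟩ := hx
  refine ⟨fun i => if i ∈ J then v (g i) else 0, fun i => ?_, fun i hi => if_neg hi, ?_, ?_⟩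
  · dsimp only
    split_ifs with hi
    exacts [hv0 _ (mem_image_of_mem g hi), le_rfl]
  · rw [sum_ite_mem, univ_inter, ← sum_image hinj, hv1]
  · simp only [ite_smul, zero_smul]
    rw [sum_ite_mem, univ_inter, ← sum_image (f := fun y => v y • y) hinj, hvx]

end ConvexCombination

theorem exists_superset_finrank_span_image_eq {K V ι : Type*} [DivisionRing K] [AddCommGroup V]
    [Module K V] [FiniteDimensional K V] (g : ι → V) (J : Finset ι) :
    ∃ I : Finset ι, J ⊆ I ∧
      #I + finrank K (span K (g '' J)) = #J + finrank K (span K (Set.range g)) ∧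
      finrank K (span K (g '' I)) = finrank K (span K (Set.range g)) := by
  classical
  obtain ⟨m, hm⟩ := Nat.exists_eq_add_of_le
    (Submodule.finrank_mono (span_mono (R := K) (Set.image_subset_range g J)))
  induction m generalizing J with
  | zero => exact ⟨J, subset_rfl, by omega, hm.symm⟩
  | succ m ih =>
    obtain ⟨i, hi⟩ : ∃ i, g i ∉ span K (g '' J) := by
      by_contra! h
      have := Submodule.finrank_mono (span_le.2 (Set.range_subset_iff.2 h))
      omega
    have hiJ : i ∉ J := fun h => hi (subset_span (Set.mem_image_of_mem g h))
    have hstep : finrank K (span K (g '' ↑(insert i J))) = finrank K (span K (g '' J)) + 1 := by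
      rw [coe_insert, Set.image_insert_eq, span_insert, sup_comm, finrank_sup_span_singleton hi]
    obtain ⟨I, hJI, hcard, hI⟩ := ih (insert i J) (by omega)
    refine ⟨I, (subset_insert i J).trans hJI, ?_, hI⟩
    rw [card_insert_of_notMem hiJ] at hcard
    omega

theorem sum_smul_fderiv_eq_zero_iff_sum_smul_Jac_row {n k : ℕ} (f : Fin k → (Fin n → ℝ) → ℝ)
    (x : Fin n → ℝ) (β : Fin k → ℝ) :
    ∑ i, β i • fderiv ℝ (f i) x = 0 ↔ ∑ i, β i • (Jac n k f x).row i = 0 := by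
  let e := (LinearEquiv.piRing ℝ ℝ (Fin n) ℝ).toLinearMap ∘ₗ ContinuousLinearMap.coeLM ℝ
  have he : Function.Injective e := fun _ _ h =>
    ContinuousLinearMap.coe_injective ((LinearEquiv.piRing ℝ ℝ (Fin n) ℝ).injective h)
  have hrow : ∀ i, e (fderiv ℝ (f i) x) = (Jac n k f x).row i := fun i => rfl
  rw [← map_eq_zero_iff e he, map_sum]
  simp only [map_smul, hrow]

theorem rank_Jac {n k : ℕ} (f : Fin k → (Fin n → ℝ) → ℝ) (x : Fin n → ℝ) :
    (Jac n k f x).rank = finrank ℝ (span ℝ (Set.range (Jac n k f x).row)) :=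
  Matrix.rank_eq_finrank_span_row _

theorem rank_JacSub {n k : ℕ} (f : Fin k → (Fin n → ℝ) → ℝ) (x : Fin n → ℝ)
    (I : Finset (Fin k)) :
    (JacSub n k f x I).rank = finrank ℝ (span ℝ ((Jac n k f x).row '' I)) := by
  rw [Matrix.rank_eq_finrank_span_row, Set.image_eq_range]
  rfl

theorem exists_subproblem_same_rank_general (n k : ℕ)
    (f : Fin k → (Fin n → ℝ) → ℝ)
    (x₀ : Fin n → ℝ) (hcrit : x₀ ∈ ParetoCriticalSub n k f Finset.univ) :
    ∃ I : Finset (Fin k), I.card = (Jac n k f x₀).rank + 1 ∧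
      (JacSub n k f x₀ I).rank = (Jac n k f x₀).rank ∧
      x₀ ∈ ParetoCriticalSub n k f I := by
  obtain ⟨α, hα0, -, hα1, hα⟩ := hcrit
  have h0 : (0 : Fin n → ℝ) ∈ convexHull ℝ ((Jac n k f x₀).row '' Set.univ) :=
    mem_convexHull_of_exists_fintype α _ hα0 hα1 (fun i => ⟨i, trivial, rfl⟩)
      ((sum_smul_fderiv_eq_zero_iff_sum_smul_Jac_row f x₀ α).1 hα)
  obtain ⟨J, -, hinj, hJ0, hJcard⟩ := exists_finset_injOn_zero_mem_convexHull_card_eq _ _ h0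
  obtain ⟨I, hJI, hIcard, hIrank⟩ :=
    exists_superset_finrank_span_image_eq (K := ℝ) (Jac n k f x₀).row J
  obtain ⟨β, hβ0, hβJ, hβ1, hβ⟩ := exists_weights_of_mem_convexHull_image hinj hJ0
  refine ⟨I, ?_, ?_, β, hβ0, fun i hi => hβJ i (fun h => hi (hJI h)), hβ1,
    (sum_smul_fderiv_eq_zero_iff_sum_smul_Jac_row f x₀ β).2 hβ⟩
  · rw [rank_Jac]
    omega
  · rw [rank_JacSub, rank_Jac, hIrank]

/-- every Pareto critical point is Pareto critical for a subproblem with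
`rank Df(x₀) + 1` objectives whose Jacobian has the same rank as `Df(x₀)`. -/
theorem exists_subproblem_same_rank (n k : ℕ)
    (f : Fin k → (Fin n → ℝ) → ℝ) (hf : ∀ i, ContDiff ℝ 1 (f i))
    (x₀ : Fin n → ℝ) (hcrit : x₀ ∈ ParetoCriticalSub n k f Finset.univ) :
    ∃ I : Finset (Fin k), I.card = (Jac n k f x₀).rank + 1 ∧
      (JacSub n k f x₀ I).rank = (Jac n k f x₀).rank ∧
      x₀ ∈ ParetoCriticalSub n k f I :=
  exists_subproblem_same_rank_general n k f x₀ hcrit
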